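/- With Ψ_N^{1,+} as above, its L²(-1,1) pairing with constants satisfies (L^+ Ψ_N^{1,+}, 1) = [N!/(2N+1)!]·(-iΩ)^{N+1}, where (f,g) = ∫_{-1}^{1} f(s)g(s) ds. -/

import Mathlib

open Complex Finset
open intervalIntegral

/-- The Jacobi polynomial `P_n^{(a,b)}(s)` with nonnegative integer parameters:
`P_n^{(a,b)}(s) = ∑_{j=0}^{n} C(n+a, n-j) C(n+b, j) ((s-1)/2)^j ((s+1)/2)^(n-j)`. -/
noncomputable def jacobiP (a b n : ℕ) (s : ℂ) : ℂ :=
  ∑ j ∈ Finset.range (n + 1),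
    (Nat.choose (n + a) (n - j) : ℂ) * (Nat.choose (n + b) j : ℂ) *
      ((s - 1) / 2) ^ j * ((s + 1) / 2) ^ (n - j)

/-- `Ψ_N^{1,+}(s) = ∑_{m=0}^N (iΩ)^m [(2N+1-m)!/(2N+1)!] P_m^{(N-m, N-m+1)}(s)`. -/
noncomputable def Psi (N : ℕ) (Ω : ℂ) (s : ℂ) : ℂ :=
  ∑ m ∈ Finset.range (N + 1),
    (I * Ω) ^ m * ((Nat.factorial (2 * N + 1 - m) : ℂ) / (Nat.factorial (2 * N + 1) : ℂ)) *
      jacobiP (N - m) (N - m + 1) m s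

lemma Rint (j : ℕ) : ∀ k : ℕ, (∫ s in (-1:ℝ)..1, ((s-1)/2)^j * ((s+1)/2)^k)
    = 2 * (-1)^j * (Nat.factorial j) * (Nat.factorial k) / (Nat.factorial (j+k+1)) := by
  induction j with
  | zero =>
    intro k
    have hk : ((k:ℝ)+1) ≠ 0 := by positivity
    have hD : ∀ x ∈ Set.uIcc (-1:ℝ) 1, HasDerivAt (fun s : ℝ => 2/((k:ℝ)+1)*((s+1)/2)^(k+1))
        (((x-1)/2)^0 * ((x+1)/2)^k) x := by
      intro x _
      have h1 : HasDerivAt (fun s : ℝ => (s+1)/2) (1/2) x := by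
        simpa using (((hasDerivAt_id x).add_const 1).div_const 2)
      have h2 := (h1.pow (k+1)).const_mul (2/((k:ℝ)+1))
      refine h2.congr_deriv ?_
      rw [Nat.add_sub_cancel]
      push_cast
      field_simp
    rw [integral_eq_sub_of_hasDerivAt hD (Continuous.intervalIntegrable (by fun_prop) _ _)]
    rw [Nat.factorial_succ]
    push_cast
    field_simp
    ring
  | succ j ih =>
    intro k
    have hk : ((k:ℝ)+1) ≠ 0 := by positivity
    have hD : ∀ x ∈ Set.uIcc (-1:ℝ) 1, HasDerivAt (fun s : ℝ => ((s-1)/2)^(j+1) * ((s+1)/2)^(k+1))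
        ((((j:ℝ)+1)/2) * (((x-1)/2)^j * ((x+1)/2)^(k+1)) + (((k:ℝ)+1)/2) * (((x-1)/2)^(j+1) * ((x+1)/2)^k)) x := by
      intro x _
      have h1 : HasDerivAt (fun s : ℝ => (s-1)/2) (1/2) x := by
        simpa using (((hasDerivAt_id x).sub_const 1).div_const 2)
      have h2 : HasDerivAt (fun s : ℝ => (s+1)/2) (1/2) x := by
        simpa using (((hasDerivAt_id x).add_const 1).div_const 2)
      have := (h1.pow (j+1)).mul (h2.pow (k+1))
      refine this.congr_deriv ?_
      simp only [Nat.add_sub_cancel, Pi.pow_apply]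
      push_cast
      ring
    have hzero : (∫ x in (-1:ℝ)..1, ((((j:ℝ)+1)/2) * (((x-1)/2)^j * ((x+1)/2)^(k+1)) + (((k:ℝ)+1)/2) * (((x-1)/2)^(j+1) * ((x+1)/2)^k))) = 0 := by
      rw [integral_eq_sub_of_hasDerivAt hD (Continuous.intervalIntegrable (by fun_prop) _ _)]
      norm_num
    rw [integral_add (Continuous.intervalIntegrable (by fun_prop) _ _)
        (Continuous.intervalIntegrable (by fun_prop) _ _),
        integral_const_mul, integral_const_mul, ih (k+1)] at hzero
    have e1 : j + (k+1) + 1 = j + k + 2 := by ring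
    have e2 : (j+1) + k + 1 = j + k + 2 := by ring
    rw [e1, Nat.factorial_succ k] at hzero
    rw [e2, Nat.factorial_succ j]
    set I := ∫ x in (-1:ℝ)..1, ((x-1)/2)^(j+1) * ((x+1)/2)^k with hIdef
    set V : ℝ := 2 * (-1)^j * (Nat.factorial j) * ((k+1) * Nat.factorial k) / (Nat.factorial (j+k+2)) with hVdef
    have h3 : I = (-((((j:ℝ)+1)/2) * V)) / (((k:ℝ)+1)/2) := by
      rw [eq_div_iff (by positivity)]
      push_cast at hzero ⊢
      linarith [hzero]
    rw [h3, hVdef]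
    have hF : ((Nat.factorial (j+k+2)):ℝ) ≠ 0 := by positivity
    push_cast
    field_simp
    ring

noncomputable def jPoly (a b n : ℕ) : Polynomial ℂ :=
  ∑ j ∈ Finset.range (n + 1),
    Polynomial.C ((Nat.choose (n + a) (n - j) : ℂ) * (Nat.choose (n + b) j : ℂ)) *
      (Polynomial.C (2⁻¹) * (Polynomial.X - 1)) ^ j * (Polynomial.C (2⁻¹) * (Polynomial.X + 1)) ^ (n - j)

noncomputable def psiPoly (N : ℕ) (Ω : ℂ) : Polynomial ℂ :=
  ∑ m ∈ Finset.range (N + 1),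
    Polynomial.C ((I * Ω) ^ m * ((Nat.factorial (2 * N + 1 - m) : ℂ) / (Nat.factorial (2 * N + 1) : ℂ))) *
      jPoly (N - m) (N - m + 1) m

lemma jacobiP_eq_eval (a b n : ℕ) (s : ℂ) : jacobiP a b n s = (jPoly a b n).eval s := by
  simp only [jacobiP, jPoly, Polynomial.eval_finset_sum, Polynomial.eval_mul, Polynomial.eval_pow,
    Polynomial.eval_add, Polynomial.eval_sub, Polynomial.eval_one, Polynomial.eval_C, Polynomial.eval_X]
  refine Finset.sum_congr rfl fun j _ => ?_
  ring

lemma Psi_eq_eval (N : ℕ) (Ω : ℂ) : Psi N Ω = fun s => (psiPoly N Ω).eval s := by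
  funext s
  simp only [Psi, psiPoly, Polynomial.eval_finset_sum, Polynomial.eval_mul, Polynomial.eval_C,
    jacobiP_eq_eval]

lemma cont_jacobiP (a b n : ℕ) : Continuous (fun s : ℝ => jacobiP a b n s) := by
  simp only [jacobiP_eq_eval]
  exact (jPoly a b n).continuous.comp Complex.continuous_ofReal

lemma cont_Psi (N : ℕ) (Ω : ℂ) : Continuous (fun s : ℝ => Psi N Ω s) := by
  simp only [Psi_eq_eval]
  exact (psiPoly N Ω).continuous.comp Complex.continuous_ofReal

lemma Jint (j k : ℕ) : (∫ s in (-1:ℝ)..1, (((s:ℂ)-1)/2)^j * (((s:ℂ)+1)/2)^k)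
    = 2*(-1:ℂ)^j*(Nat.factorial j)*(Nat.factorial k)/(Nat.factorial (j+k+1)) := by
  have h : (fun s:ℝ => (((s:ℂ)-1)/2)^j * (((s:ℂ)+1)/2)^k)
      = fun s:ℝ => ((((s-1)/2)^j * ((s+1)/2)^k : ℝ) : ℂ) := by
    funext s; push_cast; ring
  rw [h, intervalIntegral.integral_ofReal, Rint j k]
  push_cast; ring

lemma jacobiP_int (a b n : ℕ) :
    (∫ s in (-1:ℝ)..1, jacobiP a b n s)
    = ∑ j ∈ Finset.range (n+1), ((n+a).choose (n-j) : ℂ) * ((n+b).choose j : ℂ) *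
        (2*(-1:ℂ)^j*(Nat.factorial j)*(Nat.factorial (n-j))/(Nat.factorial (n+1))) := by
  simp only [jacobiP]
  rw [intervalIntegral.integral_finset_sum]
  · refine Finset.sum_congr rfl fun j hj => ?_
    have hj' : j ≤ n := by simpa [Nat.lt_succ] using hj
    have hfun : (fun s : ℝ => ((n+a).choose (n-j) : ℂ) * ((n+b).choose j : ℂ) * (((s:ℂ)-1)/2)^j * (((s:ℂ)+1)/2)^(n-j))
        = fun s : ℝ => (((n+a).choose (n-j) : ℂ) * ((n+b).choose j : ℂ)) * ((((s:ℂ)-1)/2)^j * (((s:ℂ)+1)/2)^(n-j)) := by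
      funext s; ring
    rw [hfun, intervalIntegral.integral_const_mul, Jint]
    rw [show j + (n-j) + 1 = n+1 by omega]
  · intro j hj
    apply Continuous.intervalIntegrable
    fun_prop
lemma fact_ne (n : ℕ) : ((Nat.factorial n : ℂ)) ≠ 0 := by
  exact_mod_cast Nat.cast_ne_zero.mpr (Nat.factorial_ne_zero n)

lemma ALT (n t : ℕ) : ∀ m : ℕ, m ≤ t →
    ∑ j ∈ range m, (-1:ℂ)^j * ((n+1).choose (t-j) : ℂ)
      = (n.choose t : ℂ) - (-1)^m * (n.choose (t-m) : ℂ) := by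
  intro m
  induction m with
  | zero => simp
  | succ m ih =>
    intro hm
    rw [Finset.sum_range_succ, ih (by omega)]
    have h1 : t - m = (t - (m+1)) + 1 := by omega
    rw [h1, Nat.choose_succ_succ]
    push_cast
    ring

lemma STEP2 (N m j : ℕ) (h1 : 1 ≤ m) (h2 : m ≤ N+1) (h3 : j < m) :
    (N.choose (m-1-j) : ℂ) * (Nat.factorial (m-1-j)) * ((N+1).choose j) * (Nat.factorial j) *
      (Nat.factorial (2*N+2-m))
    = (Nat.factorial N) * (Nat.factorial (N+1)) * ((2*N+2-m).choose (N+1-j)) := by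
  rw [Nat.cast_choose ℂ (show m-1-j ≤ N by omega),
      Nat.cast_choose ℂ (show j ≤ N+1 by omega),
      Nat.cast_choose ℂ (show N+1-j ≤ 2*N+2-m by omega)]
  rw [show N - (m-1-j) = N+1-m+j by omega,
      show 2*N+2-m - (N+1-j) = N+1-m+j by omega]
  have a1 := fact_ne (m-1-j)
  have a2 := fact_ne j
  have a3 := fact_ne (N+1-m+j)
  have a4 := fact_ne (N+1-j)
  field_simp

lemma KEYCORE (N m : ℕ) (h1 : 1 ≤ m) (h2 : m ≤ N+1) :
    (∑ j ∈ range m, (-1:ℂ)^j * (N.choose (m-1-j) : ℂ) * ((N+1).choose j : ℂ) *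
        (Nat.factorial j) * (Nat.factorial (m-1-j))) * (Nat.factorial (2*N+2-m))
    = (Nat.factorial N) * (Nat.factorial (N+1)) *
        (((2*N+1-m).choose (N+1) : ℂ) - (-1)^m * ((2*N+1-m).choose (N+1-m) : ℂ)) := by
  rw [Finset.sum_mul]
  have : ∀ j ∈ range m, (-1:ℂ)^j * (N.choose (m-1-j) : ℂ) * ((N+1).choose j : ℂ) *
        (Nat.factorial j) * (Nat.factorial (m-1-j)) * (Nat.factorial (2*N+2-m))
      = (Nat.factorial N) * (Nat.factorial (N+1)) * ((-1:ℂ)^j * ((2*N+2-m).choose (N+1-j) : ℂ)) := by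
    intro j hj
    have hj' : j < m := by simpa using hj
    have := STEP2 N m j h1 h2 hj'
    calc (-1:ℂ)^j * (N.choose (m-1-j) : ℂ) * ((N+1).choose j : ℂ) *
        (Nat.factorial j) * (Nat.factorial (m-1-j)) * (Nat.factorial (2*N+2-m))
        = (-1:ℂ)^j * ((N.choose (m-1-j) : ℂ) * (Nat.factorial (m-1-j)) * ((N+1).choose j : ℂ) *
            (Nat.factorial j) * (Nat.factorial (2*N+2-m))) := by ring
      _ = (-1:ℂ)^j * ((Nat.factorial N) * (Nat.factorial (N+1)) * ((2*N+2-m).choose (N+1-j) : ℂ)) := by rw [this]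
      _ = _ := by ring
  rw [Finset.sum_congr rfl this, ← Finset.mul_sum]
  rw [show 2*N+2-m = (2*N+1-m)+1 by omega, ALT (2*N+1-m) (N+1) m (by omega)]

noncomputable def cc (N m : ℕ) : ℂ := (Nat.factorial (2*N+1-m) : ℂ) / (Nat.factorial (2*N+1) : ℂ)
noncomputable def Jm (N m : ℕ) : ℂ := ∑ j ∈ range (m+1),
  (N.choose (m-j) : ℂ) * ((N+1).choose j : ℂ) *
    (2*(-1:ℂ)^j * (Nat.factorial j) * (Nat.factorial (m-j)) / (Nat.factorial (m+1)))

lemma Jm_eq_T (N i : ℕ) : Jm N i = 2 / (Nat.factorial (i+1)) *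
    ∑ j ∈ range (i+1), (-1:ℂ)^j * (N.choose (i-j) : ℂ) * ((N+1).choose j : ℂ) *
      (Nat.factorial j) * (Nat.factorial (i-j)) := by
  rw [Jm, Finset.mul_sum]
  refine Finset.sum_congr rfl fun j _ => ?_
  ring

lemma HCi (N i : ℕ) (h : i + 1 ≤ N + 1) :
    (∑ j ∈ range (i+1), (-1:ℂ)^j * (N.choose (i-j) : ℂ) * ((N+1).choose j : ℂ) *
      (Nat.factorial j) * (Nat.factorial (i-j))) * (Nat.factorial (2*N+1-i))
    = (Nat.factorial N : ℂ) * (Nat.factorial (N+1)) *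
        (((2*N-i).choose (N+1) : ℂ) - (-1:ℂ)^(i+1) * ((2*N-i).choose (N-i) : ℂ)) := by
  have HC := KEYCORE N (i+1) (by omega) h
  simp only [Nat.add_sub_cancel] at HC
  rw [show 2*N+2-(i+1) = 2*N+1-i by omega, show 2*N+1-(i+1) = 2*N-i by omega,
      show N+1-(i+1) = N-i by omega] at HC
  exact HC

lemma FACT3 (N i : ℕ) (h : i < N) :
    ((N.choose (i+1) : ℂ)) = (Nat.factorial N : ℂ) * (Nat.factorial (N+1)) * ((2*N-i).choose (N+1) : ℂ)
      / ((Nat.factorial (i+1)) * (Nat.factorial (2*N-i))) := by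
  rw [eq_div_iff (by exact mul_ne_zero (fact_ne _) (fact_ne _))]
  rw [Nat.cast_choose ℂ (show i+1 ≤ N by omega), Nat.cast_choose ℂ (show N+1 ≤ 2*N-i by omega)]
  rw [show N - (i+1) = N-i-1 by omega, show 2*N-i - (N+1) = N-i-1 by omega]
  have a1 := fact_ne (i+1); have a2 := fact_ne (N-i-1); have a3 := fact_ne (N+1)
  field_simp

lemma FACT4 (N i : ℕ) (h : i < N) :
    (((N+1).choose (i+1) : ℂ)) = (Nat.factorial N : ℂ) * (Nat.factorial (N+1)) * ((2*N-i).choose (N-i) : ℂ)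
      / ((Nat.factorial (i+1)) * (Nat.factorial (2*N-i))) := by
  rw [eq_div_iff (by exact mul_ne_zero (fact_ne _) (fact_ne _))]
  rw [Nat.cast_choose ℂ (show i+1 ≤ N+1 by omega), Nat.cast_choose ℂ (show N-i ≤ 2*N-i by omega)]
  rw [show N + 1 - (i+1) = N-i by omega, show 2*N-i - (N-i) = N by omega]
  have a1 := fact_ne (i+1); have a2 := fact_ne (N-i); have a3 := fact_ne N
  field_simp

lemma KEY2 (N i : ℕ) (h : i < N) :
    cc N i * Jm N i / 2
      = cc N (i+1) * ((N.choose (i+1) : ℂ) - (-1:ℂ)^(i+1) * ((N+1).choose (i+1) : ℂ)) := by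
  have hT : (∑ j ∈ range (i+1), (-1:ℂ)^j * (N.choose (i-j) : ℂ) * ((N+1).choose j : ℂ) *
      (Nat.factorial j) * (Nat.factorial (i-j)))
      = (Nat.factorial N : ℂ) * (Nat.factorial (N+1)) *
        (((2*N-i).choose (N+1) : ℂ) - (-1:ℂ)^(i+1) * ((2*N-i).choose (N-i) : ℂ))
        / (Nat.factorial (2*N+1-i)) := by
    rw [eq_div_iff (fact_ne _)]
    exact HCi N i (by omega)
  rw [cc, cc, Jm_eq_T, hT, FACT3 N i h, FACT4 N i h]
  rw [show 2*N+1-(i+1) = 2*N-i by omega]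
  have a1 := fact_ne (i+1); have a2 := fact_ne (2*N-i); have a3 := fact_ne (2*N+1)
  have a4 := fact_ne (2*N+1-i)
  field_simp

lemma FINAL2 (N : ℕ) :
    cc N N * Jm N N / 2 = (-1:ℂ)^N * ((Nat.factorial N : ℂ) / (Nat.factorial (2*N+1))) := by
  have hT : (∑ j ∈ range (N+1), (-1:ℂ)^j * (N.choose (N-j) : ℂ) * ((N+1).choose j : ℂ) *
      (Nat.factorial j) * (Nat.factorial (N-j)))
      = (-1:ℂ)^N * (Nat.factorial N) := by
    have HC := HCi N N (by omega)
    rw [show 2*N+1-N = N+1 by omega, show 2*N-N = N by omega, show N - N = 0 by omega] at HC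
    rw [Nat.choose_eq_zero_of_lt (by omega), Nat.choose_zero_right] at HC
    have := fact_ne (N+1)
    field_simp at HC
    push_cast at HC
    -- HC : T * (N+1)! = N! * (N+1)! * (0 - (-1)^(N+1) * 1)
    have h2 : (∑ j ∈ range (N+1), (-1:ℂ)^j * (N.choose (N-j) : ℂ) * ((N+1).choose j : ℂ) *
      (Nat.factorial j) * (Nat.factorial (N-j))) * (Nat.factorial (N+1))
        = ((-1:ℂ)^N * (Nat.factorial N)) * (Nat.factorial (N+1)) := by
      rw [HC]; ring
    exact mul_right_cancel₀ (fact_ne _) h2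
  rw [cc, Jm_eq_T, hT, show 2*N+1-N = N+1 by omega]
  have a1 := fact_ne (N+1); have a2 := fact_ne (2*N+1)
  field_simp

lemma ALG (N : ℕ) (x : ℂ) :
    -(x/2) * (∑ m ∈ range (N+1), x^m * cc N m * Jm N m)
      + ((∑ m ∈ range (N+1), x^m * cc N m * (N.choose m : ℂ))
         - (∑ m ∈ range (N+1), x^m * cc N m * ((-1:ℂ)^m * ((N+1).choose m : ℂ))))
    = ((Nat.factorial N : ℂ) / (Nat.factorial (2*N+1))) * (-x)^(N+1) := by
  have e1 : -(x/2) * (∑ m ∈ range (N+1), x^m * cc N m * Jm N m)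
      = ∑ m ∈ range (N+1), x^(m+1) * -(cc N m * Jm N m / 2) := by
    rw [Finset.mul_sum]
    refine Finset.sum_congr rfl fun m _ => ?_
    ring
  have e2 : (∑ m ∈ range (N+1), x^m * cc N m * (N.choose m : ℂ))
         - (∑ m ∈ range (N+1), x^m * cc N m * ((-1:ℂ)^m * ((N+1).choose m : ℂ)))
      = ∑ m ∈ range (N+1), x^m * cc N m * ((N.choose m : ℂ) - (-1:ℂ)^m * ((N+1).choose m : ℂ)) := by
    rw [← Finset.sum_sub_distrib]
    refine Finset.sum_congr rfl fun m _ => ?_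
    ring
  rw [e1, e2, Finset.sum_range_succ (fun m => x^(m+1) * -(cc N m * Jm N m / 2)),
      Finset.sum_range_succ' (fun m => x^m * cc N m * ((N.choose m : ℂ) - (-1:ℂ)^m * ((N+1).choose m : ℂ)))]
  simp only [pow_zero, Nat.choose_zero_right, Nat.cast_one]
  rw [show (1:ℂ) * cc N 0 * (1 - 1*1) = 0 by ring, add_zero]
  have hterm : ∀ i ∈ range N, x^(i+1) * -(cc N i * Jm N i / 2)
      = - (x^(i+1) * cc N (i+1) * ((N.choose (i+1) : ℂ) - (-1:ℂ)^(i+1) * ((N+1).choose (i+1) : ℂ))) := by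
    intro i hi
    rw [KEY2 N i (by simpa using hi)]
    ring
  rw [Finset.sum_congr rfl hterm, FINAL2 N]
  rw [Finset.sum_neg_distrib]
  have : (-x)^(N+1) = -((-1:ℂ)^N * x^(N+1)) := by
    rw [neg_pow]
    ring
  rw [this]
  ring

lemma jacobiP_one (a b n : ℕ) : jacobiP a b n 1 = (Nat.choose (n + a) n : ℂ) := by
  rw [jacobiP]
  rw [Finset.sum_eq_single 0]
  · norm_num
  · intro j hj hj0
    simp only [sub_self, zero_div]
    rw [zero_pow hj0]
    ring
  · simp

lemma jacobiP_neg_one (a b n : ℕ) : jacobiP a b n (-1) = (-1)^n * (Nat.choose (n + b) n : ℂ) := by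
  rw [jacobiP]
  rw [Finset.sum_eq_single n]
  · norm_num [mul_comm]
  · intro j hj hjn
    have : n - j ≠ 0 := by simp at hj; omega
    rw [show ((-1:ℂ) + 1)/2 = 0 by ring, zero_pow this]
    ring
  · simp

lemma psi_int (N : ℕ) (Ω : ℂ) :
    (∫ s in (-1:ℝ)..1, Psi N Ω s)
      = ∑ m ∈ Finset.range (N+1), (I*Ω)^m * cc N m * Jm N m := by
  simp only [Psi]
  rw [intervalIntegral.integral_finset_sum]
  · refine Finset.sum_congr rfl fun m hm => ?_
    have hm' : m ≤ N := by simpa [Nat.lt_succ] using hm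
    rw [intervalIntegral.integral_const_mul, jacobiP_int]
    rw [show m + (N-m) = N by omega, show m + (N-m+1) = N+1 by omega]
    rw [cc, Jm]
  · intro m hm
    apply Continuous.intervalIntegrable
    exact continuous_const.mul (cont_jacobiP _ _ _)

lemma psi_one (N : ℕ) (Ω : ℂ) :
    Psi N Ω 1 = ∑ m ∈ Finset.range (N+1), (I*Ω)^m * cc N m * (N.choose m : ℂ) := by
  simp only [Psi]
  refine Finset.sum_congr rfl fun m hm => ?_
  have hm' : m ≤ N := by simpa [Nat.lt_succ] using hm
  rw [jacobiP_one, show m + (N-m) = N by omega, cc]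

lemma psi_negone (N : ℕ) (Ω : ℂ) :
    Psi N Ω (-1) = ∑ m ∈ Finset.range (N+1), (I*Ω)^m * cc N m * ((-1:ℂ)^m * ((N+1).choose m : ℂ)) := by
  simp only [Psi]
  refine Finset.sum_congr rfl fun m hm => ?_
  have hm' : m ≤ N := by simpa [Nat.lt_succ] using hm
  rw [jacobiP_neg_one, show m + (N-m+1) = N+1 by omega, cc]

/-- `(L⁺Ψ_N^{1,+}, 1) = [N!/(2N+1)!]·(-iΩ)^{N+1}`, where
`(f,g) = ∫_{-1}^{1} f(s)g(s) ds` and `L⁺(v) = -(iΩ/2)v + v'`. -/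
theorem Lplus_Psi_pairing (N : ℕ) (Ω : ℂ) :
    (∫ s in (-1 : ℝ)..1, (-(I * Ω / 2) * Psi N Ω s + deriv (Psi N Ω) s))
      = ((Nat.factorial N : ℂ) / (Nat.factorial (2 * N + 1) : ℂ)) *
          (-(I * Ω)) ^ (N + 1) := by
  have hderiv : deriv (Psi N Ω) = fun z => (psiPoly N Ω).derivative.eval z := by
    funext z
    rw [Psi_eq_eval]
    exact (psiPoly N Ω).deriv
  have cont1 : Continuous (fun s : ℝ => -(I * Ω / 2) * Psi N Ω s) :=
    continuous_const.mul (cont_Psi N Ω)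
  have cont2 : Continuous (fun s : ℝ => (psiPoly N Ω).derivative.eval ((s:ℝ):ℂ)) :=
    ((psiPoly N Ω).derivative.continuous).comp Complex.continuous_ofReal
  rw [hderiv]
  rw [intervalIntegral.integral_add (cont1.intervalIntegrable _ _) (cont2.intervalIntegrable _ _)]
  rw [intervalIntegral.integral_const_mul]
  have hftc : (∫ s in (-1:ℝ)..1, (psiPoly N Ω).derivative.eval ((s:ℝ):ℂ))
      = (psiPoly N Ω).eval (((1:ℝ)):ℂ) - (psiPoly N Ω).eval (((-1:ℝ)):ℂ) := by
    refine intervalIntegral.integral_eq_sub_of_hasDerivAt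
      (f := fun y : ℝ => (psiPoly N Ω).eval ((y:ℝ):ℂ)) (fun x _ => ?_)
      (cont2.intervalIntegrable _ _)
    exact ((psiPoly N Ω).hasDerivAt ((x:ℝ):ℂ)).comp_ofReal
  rw [hftc]
  have h1 : (psiPoly N Ω).eval (((1:ℝ)):ℂ) = Psi N Ω 1 := by
    rw [Psi_eq_eval]; norm_num
  have h2 : (psiPoly N Ω).eval (((-1:ℝ)):ℂ) = Psi N Ω (-1) := by
    rw [Psi_eq_eval]; norm_num
  rw [h1, h2, psi_int, psi_one, psi_negone]
  have := ALG N (I * Ω)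
  calc -(I * Ω / 2) * (∑ m ∈ Finset.range (N+1), (I*Ω)^m * cc N m * Jm N m)
        + ((∑ m ∈ Finset.range (N+1), (I*Ω)^m * cc N m * (N.choose m : ℂ))
           - (∑ m ∈ Finset.range (N+1), (I*Ω)^m * cc N m * ((-1:ℂ)^m * ((N+1).choose m : ℂ))))
      = ((Nat.factorial N : ℂ) / (Nat.factorial (2*N+1))) * (-(I*Ω)) ^ (N+1) := this
    _ = _ := by norm_num
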